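/- Let P be a continuous domain. Then the ⇒_L-convergence topology on LP = {↓F : F nonempty finite ⊆ P} equals the relative Scott topology inherited from the Hoare powerdomain C(P) of nonempty Scott-closed sets; that is, the directed lower powerspace of (P, σ(P)) is a subspace of the lower powerdomain H(P). -/

import Mathlib

variable {X : Type*}

/-- The specialization order: `x ⊑ y` iff `x ∈ closure {y}`. -/
def sle [TopologicalSpace X] (x y : X) : Prop := x ∈ closure {y}

/-- A directed subset with respect to the specialization order. -/
def IsDirSet [TopologicalSpace X] (D : Set X) : Prop :=
  D.Nonempty ∧ ∀ a ∈ D, ∀ b ∈ D, ∃ c ∈ D, sle a c ∧ sle b c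

/-- `DConv D x`: the directed set `D`, viewed as a net (indexed by itself with
the specialization order), converges to `x`. -/
def DConv [TopologicalSpace X] (D : Set X) (x : X) : Prop :=
  IsDirSet D ∧ ∀ U : Set X, IsOpen U → x ∈ U → ∃ d ∈ D, ∀ e ∈ D, sle d e → e ∈ U

/-- Directed open set. -/
def DOpen [TopologicalSpace X] (U : Set X) : Prop :=
  ∀ D : Set X, ∀ x : X, DConv D x → x ∈ U → (D ∩ U).Nonempty

/-- A directed space: every directed open set is open. -/
def IsDirectedSpace (X : Type*) [TopologicalSpace X] : Prop :=
  ∀ U : Set X, DOpen U → IsOpen U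

/-- Down-closure with respect to the specialization order. -/
def dcl [TopologicalSpace X] (F : Set X) : Set X := {x | ∃ a ∈ F, sle x a}

/-- Membership in `LX`: down-closures of nonempty finite sets. -/
def InLX [TopologicalSpace X] (A : Set X) : Prop :=
  ∃ F : Finset X, F.Nonempty ∧ A = dcl (F : Set X)

/-- A directed (under inclusion) family of elements of `LX`. -/
def LDir [TopologicalSpace X] (𝒟 : Set (Set X)) : Prop :=
  (∀ B ∈ 𝒟, InLX B) ∧ 𝒟.Nonempty ∧ ∀ A ∈ 𝒟, ∀ B ∈ 𝒟, ∃ C ∈ 𝒟, A ⊆ C ∧ B ⊆ C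

/-- The convergence `𝒟 ⇒_L ↓F`. -/
def LConv [TopologicalSpace X] (𝒟 : Set (Set X)) (A : Set X) : Prop :=
  LDir 𝒟 ∧ ∃ F : Finset X, F.Nonempty ∧ A = dcl (F : Set X) ∧
    ∀ a ∈ F, ∃ D : Set X, D ⊆ ⋃₀ 𝒟 ∧ DConv D a

/-- `⇒_L`-convergence open subsets of `LX`. -/
def LOpen [TopologicalSpace X] (𝒰 : Set (Set X)) : Prop :=
  (∀ A ∈ 𝒰, InLX A) ∧ ∀ 𝒟 A, LConv 𝒟 A → A ∈ 𝒰 → (𝒟 ∩ 𝒰).Nonempty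

/-- Scott-open subsets of a preordered set. -/
def ScottOpens [Preorder X] (U : Set X) : Prop :=
  IsUpperSet U ∧ ∀ D : Set X, D.Nonempty → DirectedOn (· ≤ ·) D →
    ∀ a, IsLUB D a → a ∈ U → (D ∩ U).Nonempty

/-- Scott-closed subsets. -/
def ScottClosedSet [Preorder X] (A : Set X) : Prop :=
  IsLowerSet A ∧ ∀ D : Set X, D ⊆ A → D.Nonempty → DirectedOn (· ≤ ·) D →
    ∀ a, IsLUB D a → a ∈ A

/-- Nonempty Scott-closed set (element of `C(P)`). -/
def IsCl [Preorder X] (A : Set X) : Prop := A.Nonempty ∧ ScottClosedSet A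

/-- `S` is the least upper bound in `C(P)` (ordered by inclusion) of the family `𝒟`. -/
def IsLubCl [Preorder X] (𝒟 : Set (Set X)) (S : Set X) : Prop :=
  IsCl S ∧ (∀ A ∈ 𝒟, A ⊆ S) ∧ ∀ T, IsCl T → (∀ A ∈ 𝒟, A ⊆ T) → S ⊆ T

/-- Scott-open family of nonempty Scott-closed sets, i.e. Scott-open subsets of `C(P)`. -/
def SOC [Preorder X] (𝒲 : Set (Set X)) : Prop :=
  (∀ A ∈ 𝒲, IsCl A) ∧
  (∀ A B, A ∈ 𝒲 → IsCl B → A ⊆ B → B ∈ 𝒲) ∧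
  ∀ 𝒟 S, (∀ A ∈ 𝒟, IsCl A) → 𝒟.Nonempty → DirectedOn (· ⊆ ·) 𝒟 →
    IsLubCl 𝒟 S → S ∈ 𝒲 → (𝒟 ∩ 𝒲).Nonempty

/-- The way-below relation. -/
def wayBelow [Preorder X] (y x : X) : Prop :=
  ∀ D : Set X, D.Nonempty → DirectedOn (· ≤ ·) D → ∀ a, IsLUB D a → x ≤ a → ∃ d ∈ D, y ≤ d

/-- A continuous domain: a dcpo in which every element is the directed supremum
of the elements way below it. -/
def IsContinuousDomain (X : Type*) [Preorder X] : Prop :=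
  (∀ D : Set X, D.Nonempty → DirectedOn (· ≤ ·) D → ∃ a, IsLUB D a) ∧
  ∀ x : X, {y | wayBelow y x}.Nonempty ∧ DirectedOn (· ≤ ·) {y | wayBelow y x} ∧
    IsLUB {y | wayBelow y x} x

/-!
For the Scott topology the nonempty Scott-closed sets are exactly the nonempty closed sets, so
the supremum in `C(P)` of a directed family `𝒟` is the closure of `⋃ 𝒟`. If `𝒟 ⇒_L ↓F`, each
point of `F` is the limit of a directed subset of `⋃ 𝒟` and therefore lies in this closure;
hence the trace on `LP` of a Scott-open subset of `C(P)` is `⇒_L`-open.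

Conversely a `⇒_L`-open `𝒱` is upward closed in `LP`, and its upward closure in `C(P)` is
Scott-open: if `↓F ⊆ cl (⋃ 𝒟)`, then everything way below a point of `F` lies in the lower set
`⋃ 𝒟`, because `↟y` is Scott-open (interpolation). So `↓F` is the `⇒_L`-limit of the
down-closures of finite subsets of `⋃ 𝒟`; one of them is in `𝒱` and, being finite, sits inside
a single member of `𝒟`.
-/

open Set

section Topology

variable [TopologicalSpace X]

lemma sle_refl (x : X) : sle x x := subset_closure rfl

lemma subset_dcl (F : Set X) : F ⊆ dcl F := fun a ha => ⟨a, ha, sle_refl a⟩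

lemma dcl_mono {F G : Set X} (h : F ⊆ G) : dcl F ⊆ dcl G := fun _ ⟨a, ha, hxa⟩ => ⟨a, h ha, hxa⟩

lemma dcl_eq_biUnion_closure (F : Set X) : dcl F = ⋃ a ∈ F, closure {a} := by
  ext
  simp [dcl, sle]

lemma isClosed_dcl (F : Finset X) : IsClosed (dcl (F : Set X)) := by
  rw [dcl_eq_biUnion_closure]
  exact F.finite_toSet.isClosed_biUnion fun _ _ => isClosed_closure

lemma dcl_subset_of_isClosed {F C : Set X} (hC : IsClosed C) (hFC : F ⊆ C) : dcl F ⊆ C :=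
  fun _ ⟨_, ha, hxa⟩ => closure_minimal (singleton_subset_iff.2 (hFC ha)) hC hxa

lemma DConv.mem_closure {D : Set X} {a : X} (h : DConv D a) : a ∈ closure D := by
  refine mem_closure_iff.2 fun U hU haU => ?_
  obtain ⟨d, hd, hdU⟩ := h.2 U hU haU
  exact ⟨d, hdU d hd (sle_refl d), hd⟩

lemma dConv_singleton (a : X) : DConv {a} a := by
  refine ⟨⟨singleton_nonempty a, ?_⟩, fun U _ haU => ⟨a, rfl, ?_⟩⟩
  · intro u hu v hv
    rw [mem_singleton_iff] at hu hv
    exact ⟨a, rfl, hu ▸ sle_refl a, hv ▸ sle_refl a⟩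
  · intro e he _
    rw [mem_singleton_iff.1 he]
    exact haU

lemma LConv.subset_closure_sUnion {𝒟 : Set (Set X)} {A : Set X} (h : LConv 𝒟 A) :
    A ⊆ closure (⋃₀ 𝒟) := by
  obtain ⟨-, F, -, rfl, hF⟩ := h
  refine dcl_subset_of_isClosed isClosed_closure fun a ha => ?_
  obtain ⟨D, hD, hDa⟩ := hF a ha
  exact closure_mono hD hDa.mem_closure

lemma LOpen.mem_of_subset {𝒱 : Set (Set X)} (hV : LOpen 𝒱) {A B : Set X} (hA : A ∈ 𝒱)
    (hAB : A ⊆ B) (hB : InLX B) : B ∈ 𝒱 := by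
  obtain ⟨F, hF, rfl⟩ := hV.1 A hA
  have hconv : LConv {B} (dcl (F : Set X)) := by
    refine ⟨⟨?_, singleton_nonempty B, ?_⟩, F, hF, rfl, fun a ha => ⟨{a}, ?_, dConv_singleton a⟩⟩
    · intro C hC
      rwa [mem_singleton_iff.1 hC]
    · intro C hC C' hC'
      rw [mem_singleton_iff.1 hC, mem_singleton_iff.1 hC']
      exact ⟨B, rfl, subset_rfl, subset_rfl⟩
    · simpa using hAB (subset_dcl _ ha)
  obtain ⟨_, rfl, hBV⟩ := hV.2 _ _ hconv hA
  exact hBV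

def finDcls (L : Set X) : Set (Set X) :=
  {E | ∃ G : Finset X, G.Nonempty ∧ ↑G ⊆ L ∧ E = dcl ↑G}

lemma subset_sUnion_finDcls (L : Set X) : L ⊆ ⋃₀ finDcls L := fun y hy =>
  ⟨dcl ↑({y} : Finset X), ⟨{y}, Finset.singleton_nonempty y, by simpa using hy, rfl⟩,
    subset_dcl _ (by simp)⟩

lemma lDir_finDcls {L : Set X} (hL : L.Nonempty) : LDir (finDcls L) := by
  classical
  refine ⟨?_, ?_, ?_⟩
  · rintro _ ⟨G, hG, -, rfl⟩
    exact ⟨G, hG, rfl⟩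
  · obtain ⟨E, hE, -⟩ := subset_sUnion_finDcls L hL.some_mem
    exact ⟨E, hE⟩
  · rintro _ ⟨G₁, hG₁, hG₁L, rfl⟩ _ ⟨G₂, -, hG₂L, rfl⟩
    refine ⟨dcl ↑(G₁ ∪ G₂), ⟨G₁ ∪ G₂, hG₁.mono Finset.subset_union_left, ?_, rfl⟩,
      dcl_mono ?_, dcl_mono ?_⟩
    · rw [Finset.coe_union]
      exact union_subset hG₁L hG₂L
    · exact Finset.coe_subset.2 Finset.subset_union_left
    · exact Finset.coe_subset.2 Finset.subset_union_right

end Topology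

section Order

variable [Preorder X]

lemma scottOpens_compl_iff {C : Set X} : ScottOpens Cᶜ ↔ ScottClosedSet C := by
  unfold ScottOpens ScottClosedSet
  rw [isUpperSet_compl]
  refine and_congr_right fun _ => ⟨fun h D hDC hne hdir a ha => ?_, fun h D hne hdir a ha haC => ?_⟩
  · by_contra haC
    obtain ⟨d, hd, hdC⟩ := h D hne hdir a ha haC
    exact hdC (hDC hd)
  · rw [inter_compl_nonempty_iff]
    exact fun hDC => haC (h D hDC hne hdir a ha)

lemma scottClosedSet_Iic (y : X) : ScottClosedSet (Iic y) :=
  ⟨isLowerSet_Iic y, fun _ hD _ _ _ ha => ha.2 hD⟩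

lemma wayBelow.le {y x : X} (h : wayBelow y x) : y ≤ x := by
  obtain ⟨d, rfl, hyd⟩ := h {x} (singleton_nonempty x) (directedOn_singleton x) x
    isLUB_singleton le_rfl
  exact hyd

lemma wayBelow.mono {y' y x x' : X} (h : wayBelow y x) (hy : y' ≤ y) (hx : x ≤ x') :
    wayBelow y' x' := fun D hne hdir a ha hxa =>
  let ⟨d, hd, hyd⟩ := h D hne hdir a ha (hx.trans hxa)
  ⟨d, hd, hy.trans hyd⟩

/-- Interpolation: the elements way below something way below `a` form a directed set with
supremum `a`, so one of them is above any `y ≪ a`. -/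
lemma exists_wayBelow_wayBelow (hcont : IsContinuousDomain X) {y a : X} (h : wayBelow y a) :
    ∃ w, wayBelow y w ∧ wayBelow w a := by
  set I : Set X := {z | ∃ w, wayBelow z w ∧ wayBelow w a}
  obtain ⟨⟨w₀, hw₀⟩, hdir, hlub⟩ := hcont.2 a
  have hIne : I.Nonempty :=
    let ⟨z₀, hz₀⟩ := (hcont.2 w₀).1
    ⟨z₀, w₀, hz₀, hw₀⟩
  have hIdir : DirectedOn (· ≤ ·) I := by
    rintro z₁ ⟨w₁, hz₁, hw₁⟩ z₂ ⟨w₂, hz₂, hw₂⟩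
    obtain ⟨w, hw, hw₁w, hw₂w⟩ := hdir w₁ hw₁ w₂ hw₂
    obtain ⟨z, hz, hz₁z, hz₂z⟩ :=
      (hcont.2 w).2.1 z₁ (hz₁.mono le_rfl hw₁w) z₂ (hz₂.mono le_rfl hw₂w)
    exact ⟨z, ⟨w, hz, hw⟩, hz₁z, hz₂z⟩
  have hIlub : IsLUB I a := by
    refine ⟨fun z ⟨w, hz, hw⟩ => hz.le.trans hw.le, fun b hb => hlub.2 fun w hw => ?_⟩
    exact (hcont.2 w).2.2.2 fun z hz => hb ⟨w, hz, hw⟩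
  obtain ⟨z, ⟨w, hzw, hwa⟩, hyz⟩ := h I hIne hIdir a hIlub le_rfl
  exact ⟨w, hzw.mono hyz le_rfl, hwa⟩

lemma scottOpens_setOf_wayBelow (hcont : IsContinuousDomain X) (y : X) :
    ScottOpens {z | wayBelow y z} := by
  refine ⟨fun a b hab ha => ha.mono le_rfl hab, fun D hne hdir a ha hya => ?_⟩
  obtain ⟨w, hyw, hwa⟩ := exists_wayBelow_wayBelow hcont hya
  obtain ⟨d, hd, hwd⟩ := hwa D hne hdir a ha le_rfl
  exact ⟨d, hd, hyw.mono le_rfl hwd⟩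

end Order

def IsScottTopology (X : Type*) [Preorder X] [TopologicalSpace X] : Prop :=
  ∀ U : Set X, IsOpen U ↔ ScottOpens U

namespace IsScottTopology

variable [Preorder X] [TopologicalSpace X]

lemma scottClosedSet_iff_isClosed (hs : IsScottTopology X) {C : Set X} :
    ScottClosedSet C ↔ IsClosed C := by
  rw [← scottOpens_compl_iff, ← hs, isOpen_compl_iff]

lemma closure_singleton (hs : IsScottTopology X) (y : X) : closure {y} = Iic y := by
  refine (closure_minimal (singleton_subset_iff.2 self_mem_Iic) ?_).antisymm fun _ hx => ?_
  · exact hs.scottClosedSet_iff_isClosed.1 (scottClosedSet_Iic y)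
  · exact (hs.scottClosedSet_iff_isClosed.2 isClosed_closure).1 hx (subset_closure rfl)

lemma sle_iff_le (hs : IsScottTopology X) {x y : X} : sle x y ↔ x ≤ y := by
  rw [sle, hs.closure_singleton]
  rfl

lemma isCl_closure (hs : IsScottTopology X) {L : Set X} (hL : L.Nonempty) : IsCl (closure L) :=
  ⟨hL.mono subset_closure, hs.scottClosedSet_iff_isClosed.2 isClosed_closure⟩

lemma isCl_dcl (hs : IsScottTopology X) {F : Finset X} (hF : F.Nonempty) :
    IsCl (dcl (F : Set X)) :=
  ⟨(Finset.coe_nonempty.2 hF).mono (subset_dcl _), hs.scottClosedSet_iff_isClosed.2 (isClosed_dcl F)⟩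

lemma isLubCl_closure_sUnion (hs : IsScottTopology X) {𝒟 : Set (Set X)}
    (hne : (⋃₀ 𝒟).Nonempty) : IsLubCl 𝒟 (closure (⋃₀ 𝒟)) :=
  ⟨hs.isCl_closure hne, fun _ hA => (subset_sUnion_of_mem hA).trans subset_closure,
    fun _ hT h𝒟T => closure_minimal (sUnion_subset h𝒟T) (hs.scottClosedSet_iff_isClosed.1 hT.2)⟩

lemma dConv_of_isLUB (hs : IsScottTopology X) {D : Set X} {a : X} (hne : D.Nonempty)
    (hdir : DirectedOn (· ≤ ·) D) (ha : IsLUB D a) : DConv D a := by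
  refine ⟨⟨hne, fun u hu v hv => ?_⟩, fun U hU haU => ?_⟩
  · obtain ⟨c, hc, huc, hvc⟩ := hdir u hu v hv
    exact ⟨c, hc, hs.sle_iff_le.2 huc, hs.sle_iff_le.2 hvc⟩
  · obtain ⟨hUup, hU⟩ := (hs U).1 hU
    obtain ⟨d, hd, hdU⟩ := hU D hne hdir a ha haU
    exact ⟨d, hd, fun _ _ hde => hUup (hs.sle_iff_le.1 hde) hdU⟩

lemma mem_of_wayBelow_of_mem_closure (hs : IsScottTopology X) (hcont : IsContinuousDomain X)
    {L : Set X} (hL : IsLowerSet L) {a y : X} (ha : a ∈ closure L) (hya : wayBelow y a) :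
    y ∈ L := by
  obtain ⟨l, hyl, hl⟩ :=
    mem_closure_iff.1 ha _ ((hs _).2 (scottOpens_setOf_wayBelow hcont y)) hya
  exact hL hyl.le hl

end IsScottTopology

section PowerDomain

variable [Preorder X] [TopologicalSpace X]

lemma lOpen_inter_inLX (hs : IsScottTopology X) {𝒲 : Set (Set X)} (hW : SOC 𝒲) :
    LOpen {A | A ∈ 𝒲 ∧ InLX A} := by
  refine ⟨fun A hA => hA.2, fun 𝒟 A hconv ⟨hAW, _⟩ => ?_⟩
  obtain ⟨hLX, hne, hdir⟩ := hconv.1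
  have hcl : ∀ B ∈ 𝒟, IsCl B := fun B hB =>
    let ⟨_, hG, hBG⟩ := hLX B hB
    hBG ▸ hs.isCl_dcl hG
  have hlub : IsLubCl 𝒟 (closure (⋃₀ 𝒟)) :=
    hs.isLubCl_closure_sUnion <| nonempty_sUnion.2 <| let ⟨B, hB⟩ := hne; ⟨B, hB, (hcl B hB).1⟩
  obtain ⟨B, hB, hBW⟩ :=
    hW.2.2 𝒟 _ hcl hne hdir hlub (hW.2.1 A _ hAW hlub.1 hconv.subset_closure_sUnion)
  exact ⟨B, hB, hBW, hLX B hB⟩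

def upperClosureCl (𝒱 : Set (Set X)) : Set (Set X) := {B | IsCl B ∧ ∃ A ∈ 𝒱, A ⊆ B}

lemma LOpen.eq_upperClosureCl_inter_inLX (hs : IsScottTopology X) {𝒱 : Set (Set X)}
    (hV : LOpen 𝒱) : 𝒱 = {A | A ∈ upperClosureCl 𝒱 ∧ InLX A} := by
  ext A
  refine ⟨fun hA => ⟨⟨?_, A, hA, subset_rfl⟩, hV.1 A hA⟩,
    fun ⟨⟨_, A', hA', hA'A⟩, hA⟩ => hV.mem_of_subset hA' hA'A hA⟩
  obtain ⟨F, hF, rfl⟩ := hV.1 A hA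
  exact hs.isCl_dcl hF

lemma LOpen.soc_upperClosureCl (hs : IsScottTopology X) (hcont : IsContinuousDomain X)
    {𝒱 : Set (Set X)} (hV : LOpen 𝒱) : SOC (upperClosureCl 𝒱) := by
  refine ⟨fun B hB => hB.1, fun A B ⟨_, A', hA', hA'A⟩ hB hAB => ⟨hB, A', hA', hA'A.trans hAB⟩, ?_⟩
  rintro 𝒟 S hcl hne hdir hS ⟨-, A, hA, hAS⟩
  set L := ⋃₀ 𝒟
  have hLne : L.Nonempty := nonempty_sUnion.2 <| let ⟨B, hB⟩ := hne; ⟨B, hB, (hcl B hB).1⟩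
  have hLlower : IsLowerSet L := isLowerSet_sUnion fun B hB => (hcl B hB).2.1
  have hSL : S ⊆ closure L :=
    hS.2.2 _ (hs.isCl_closure hLne) fun B hB => (subset_sUnion_of_mem hB).trans subset_closure
  have hconv : LConv (finDcls L) A := by
    obtain ⟨F, hF, rfl⟩ := hV.1 A hA
    refine ⟨lDir_finDcls hLne, F, hF, rfl, fun a ha => ⟨{y | wayBelow y a}, fun y hy => ?_, ?_⟩⟩
    · exact subset_sUnion_finDcls L <|
        hs.mem_of_wayBelow_of_mem_closure hcont hLlower (hSL (hAS (subset_dcl _ ha))) hy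
    · obtain ⟨hne, hdir, hlub⟩ := hcont.2 a
      exact hs.dConv_of_isLUB hne hdir hlub
  obtain ⟨_, ⟨G, -, hGL, rfl⟩, hGV⟩ := hV.2 _ A hconv hA
  obtain ⟨B, hB, hGB⟩ := hdir.exists_mem_subset_of_finite_of_subset_sUnion hne G.finite_toSet hGL
  have hBclosed : IsClosed B := hs.scottClosedSet_iff_isClosed.1 (hcl B hB).2
  exact ⟨B, hB, hcl B hB, _, hGV, dcl_subset_of_isClosed hBclosed hGB⟩

end PowerDomain

/-- for a continuous domain `P` with the Scott topology, the
`⇒_L`-topology on `LP` equals the relative Scott topology inherited from the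
Hoare powerdomain `C(P)`. -/
theorem stmt_14 {P : Type*} [PartialOrder P] [TopologicalSpace P]
    (hscott : ∀ U : Set P, IsOpen U ↔ ScottOpens U)
    (hcont : IsContinuousDomain P) :
    ∀ 𝒱 : Set (Set P),
      LOpen 𝒱 ↔ ∃ 𝒲 : Set (Set P), SOC 𝒲 ∧ 𝒱 = {A | A ∈ 𝒲 ∧ InLX A} := by
  intro 𝒱
  constructor
  · intro hV
    exact ⟨_, hV.soc_upperClosureCl hscott hcont, hV.eq_upperClosureCl_inter_inLX hscott⟩
  · rintro ⟨𝒲, hW, rfl⟩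
    exact lOpen_inter_inLX hscott hW
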